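/- arXiv:1707.06869 — 4 statements merged into one kernel-verified Lean document; each statement's English description precedes it below -/
import Mathlib

section
/- Let d ≥ 2, q₀ = 1, q₁,…,q_{d−1} ∈ (0,1] with Σ_{i=1}^{d−1} q_i ≤ 1, and let P be the d×d matrix with P_{0,0} = 1 − Σ_{i≥1} q_i, P_{i,0} = q_i for i ≥ 1, P_{0,j} = 1 for j ≥ 1, and P_{i,j} = 0 for i,j ≥ 1. If A and B are d×d column-stochastic nonnegative matrices fixing the Gibbs vector g (g_i = q_i/Σ_j q_j) such that P = A·B, then A = P or B = P. -/
/-- the Thermal Process `P` cannot be factored nontrivially into a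
product of two Thermal Processes: if `P = A * B` with `A`, `B` column-stochastic
nonnegative matrices fixing the Gibbs vector `g`, then `A = P` or `B = P`. -/
theorem stmt_2 (d : ℕ) (hd : 2 ≤ d) [NeZero d] (q : Fin d → ℝ)
    (hq0 : q 0 = 1) (hq : ∀ i : Fin d, i ≠ 0 → 0 < q i ∧ q i ≤ 1)
    (hqsum : ∑ i ∈ Finset.univ.filter (· ≠ (0 : Fin d)), q i ≤ 1)
    (g : Fin d → ℝ) (hg : ∀ i, g i = q i / ∑ j, q j)
    (P : Matrix (Fin d) (Fin d) ℝ)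
    (hP : P = fun i j => if j = 0 then
        (if i = 0 then 1 - ∑ k ∈ Finset.univ.filter (· ≠ (0 : Fin d)), q k else q i)
        else (if i = 0 then (1 : ℝ) else 0))
    (A B : Matrix (Fin d) (Fin d) ℝ)
    (hA : (∀ i j, 0 ≤ A i j) ∧ (∀ j, ∑ i, A i j = 1) ∧ A.mulVec g = g)
    (hB : (∀ i j, 0 ≤ B i j) ∧ (∀ j, ∑ i, B i j = 1) ∧ B.mulVec g = g)
    (hAB : P = A * B) :
    A = P ∨ B = P := by
  obtain ⟨hAnn, hAcol, hAg⟩ := hA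
  obtain ⟨hBnn, hBcol, hBg⟩ := hB
  set S := ∑ i ∈ Finset.univ.filter (· ≠ (0 : Fin d)), q i with hS
  have hqnn : ∀ j, 0 ≤ q j := by
    intro j
    by_cases h : j = 0
    · rw [h, hq0]; norm_num
    · exact (hq j h).1.le
  have hSnn : 0 ≤ S := Finset.sum_nonneg (fun i _ => hqnn i)
  have hQ : ∑ j, q j = 1 + S := by
    have h1 := Finset.sum_filter_add_sum_filter_not Finset.univ (· ≠ (0 : Fin d)) q
    have h2 : Finset.univ.filter (fun x => ¬ x ≠ (0 : Fin d)) = {0} := by ext x; simp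
    rw [h2, Finset.sum_singleton, hq0] at h1
    linarith
  have hQpos : 0 < ∑ j, q j := by rw [hQ]; linarith
  have hgpos : ∀ i, 0 < g i := by
    intro i; rw [hg]; apply div_pos _ hQpos
    by_cases h : i = 0
    · rw [h, hq0]; norm_num
    · exact (hq i h).1
  have hg0 : g 0 = 1 / ∑ j, q j := by rw [hg, hq0]
  have hgsum : ∑ j, g j = 1 := by
    have h1 : ∑ j, g j = ∑ j, q j / (∑ k, q k) :=
      Finset.sum_congr rfl (fun j _ => hg j)
    rw [h1, ← Finset.sum_div, div_self hQpos.ne']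
  have hAgi : ∀ i, ∑ k, A i k * g k = g i := by
    intro i
    have := congrFun hAg i
    simpa [Matrix.mulVec, dotProduct] using this
  have hBgi : ∀ i, ∑ k, B i k * g k = g i := by
    intro i
    have := congrFun hBg i
    simpa [Matrix.mulVec, dotProduct] using this
  have hABij : ∀ i j, P i j = ∑ k, A i k * B k j := by
    intro i j; rw [hAB, Matrix.mul_apply]
  -- key: zero pattern from P's columns j ≠ 0
  have key : ∀ j : Fin d, j ≠ 0 → ∀ k, B k j ≠ 0 → ∀ i, i ≠ 0 → A i k = 0 := by
    intro j hj k hk i hi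
    have hPij : (0 : ℝ) = ∑ k', A i k' * B k' j := by
      have h := hABij i j
      rw [hP] at h
      simpa [hj, hi] using h
    have hterm : A i k * B k j = 0 := by
      have hnn : ∀ k' ∈ Finset.univ, (0 : ℝ) ≤ A i k' * B k' j :=
        fun k' _ => mul_nonneg (hAnn i k') (hBnn k' j)
      exact (Finset.sum_eq_zero_iff_of_nonneg hnn).mp hPij.symm k (Finset.mem_univ k)
    rcases mul_eq_zero.mp hterm with h | h
    · exact h
    · exact absurd h hk
  by_cases h0 : ∀ i, i ≠ 0 → A i 0 = 0
  · -- column 0 of A is e₀ ⟹ B = P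
    right
    have colB : ∀ j, j ≠ 0 → ∀ k, k ≠ 0 → B k j = 0 := by
      intro j hj k hk
      by_contra hBkj
      have hAcolk : ∀ i, i ≠ 0 → A i k = 0 := key j hj k hBkj
      have hA00 : A 0 0 = 1 := by
        have h := hAcol 0
        rwa [Fintype.sum_eq_single 0 (fun i hi => h0 i hi)] at h
      have hA0k : A 0 k = 1 := by
        have h := hAcol k
        rwa [Fintype.sum_eq_single 0 (fun i hi => hAcolk i hi)] at h
      have hpair : ∑ k' ∈ ({0, k} : Finset (Fin d)), A 0 k' * g k' ≤ ∑ k', A 0 k' * g k' :=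
        Finset.sum_le_sum_of_subset_of_nonneg (Finset.subset_univ _)
          (fun i _ _ => mul_nonneg (hAnn 0 i) (hgpos i).le)
      rw [Finset.sum_pair (Ne.symm hk), hA00, hA0k, one_mul, one_mul, hAgi 0] at hpair
      linarith [hgpos k]
    have hBtop : ∀ j, j ≠ 0 → B 0 j = 1 := by
      intro j hj
      have h := hBcol j
      rwa [Fintype.sum_eq_single 0 (fun i hi => colB j hj i hi)] at h
    have hBi0 : ∀ i, i ≠ 0 → B i 0 = q i := by
      intro i hi
      have h := hBgi i
      rw [Fintype.sum_eq_single 0 (fun j hj => by rw [colB j hj i hi, zero_mul])] at h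
      rw [hg0, hg i] at h
      field_simp at h
      linarith
    have hB00 : B 0 0 = 1 - S := by
      have h := hBgi 0
      rw [← Finset.add_sum_erase Finset.univ (fun j => B 0 j * g j)
        (Finset.mem_univ (0 : Fin d))] at h
      have herase : ∑ j ∈ Finset.univ.erase 0, B 0 j * g j = ∑ j ∈ Finset.univ.erase 0, g j := by
        refine Finset.sum_congr rfl (fun j hj => ?_)
        rw [hBtop j (Finset.ne_of_mem_erase hj), one_mul]
      have herase2 : ∑ j ∈ Finset.univ.erase 0, g j = 1 - g 0 := by
        have h3 := Finset.add_sum_erase Finset.univ g (Finset.mem_univ (0 : Fin d))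
        rw [hgsum] at h3
        linarith
      rw [herase, herase2] at h
      rw [hg0, hQ] at h
      have h1S : (0:ℝ) < 1 + S := by linarith
      field_simp at h
      linarith
    ext i j
    rw [hP]
    by_cases hj : j = 0
    · by_cases hi : i = 0
      · simp [hi, hj, hB00, ← hS]
      · simp [hi, hj, hBi0 i hi]
    · by_cases hi : i = 0
      · simp [hi, hj, hBtop j hj]
      · simp [hi, hj, colB j hj i hi]
  · -- some mass below in column 0 of A ⟹ A = P
    left
    push_neg at h0
    obtain ⟨i₀, hi₀, hAi₀⟩ := h0
    have hB0j : ∀ j, j ≠ 0 → B 0 j = 0 := by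
      intro j hj
      by_contra h
      exact hAi₀ (key j hj 0 h i₀ hi₀)
    have hB00 : B 0 0 = 1 := by
      have h := hBgi 0
      rw [Fintype.sum_eq_single 0 (fun j hj => by rw [hB0j j hj, zero_mul])] at h
      exact mul_right_cancel₀ (hgpos 0).ne' (h.trans (one_mul (g 0)).symm)
    have hBi0 : ∀ i, i ≠ 0 → B i 0 = 0 := by
      intro i hi
      have hle : ∑ k ∈ ({0, i} : Finset (Fin d)), B k 0 ≤ ∑ k, B k 0 :=
        Finset.sum_le_sum_of_subset_of_nonneg (Finset.subset_univ _)
          (fun k _ _ => hBnn k 0)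
      rw [Finset.sum_pair (Ne.symm hi), hBcol 0, hB00] at hle
      have := hBnn i 0
      linarith
    have hAcols : ∀ k, k ≠ 0 → ∀ i, i ≠ 0 → A i k = 0 := by
      intro k hk
      have h := hBgi k
      have hex : ∃ j, B k j * g j ≠ 0 := by
        by_contra hc
        push_neg at hc
        have hz : ∑ j, B k j * g j = 0 := Finset.sum_eq_zero (fun j _ => hc j)
        rw [hz] at h
        exact absurd h.symm (hgpos k).ne'
      obtain ⟨j, hj⟩ := hex
      have hBkj : B k j ≠ 0 := fun h' => hj (by rw [h', zero_mul])
      have hjne : j ≠ 0 := by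
        rintro rfl
        exact hBkj (hBi0 k hk)
      exact key j hjne k hBkj
    have hAi0 : ∀ i, A i 0 = P i 0 := by
      intro i
      have h := hABij i 0
      rw [Fintype.sum_eq_single 0 (fun k hk => by rw [hBi0 k hk, mul_zero])] at h
      rw [hB00, mul_one] at h
      exact h.symm
    have hA0k : ∀ k, k ≠ 0 → A 0 k = 1 := by
      intro k hk
      have h := hAcol k
      rwa [Fintype.sum_eq_single 0 (fun i hi => hAcols k hk i hi)] at h
    ext i j
    by_cases hj : j = 0
    · rw [hj]; exact hAi0 i
    · rw [hP]
      by_cases hi : i = 0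
      · simp [hi, hj, hA0k j hj]
      · simp [hi, hj, hAcols j hj i hi]
end

section
/- Let d ≥ 2, q₀ = 1, q₁,…,q_{d−1} ∈ (0,1] with Σ_{i=1}^{d−1} q_i ≤ 1, and let P be the matrix with P_{0,0} = 1 − Σ_{i≥1} q_i, P_{i,0} = q_i (i ≥ 1), P_{0,j} = 1 (j ≥ 1), P_{i,j} = 0 (i,j ≥ 1). Then P is an extreme point of the convex set of column-stochastic nonnegative matrices fixing the Gibbs vector g: if P = λA + (1−λ)B with A, B in this set and λ ∈ (0,1), then A = B = P. -/
/-- `P` is an extreme point of the convex set of column-stochastic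
nonnegative matrices fixing the Gibbs vector `g`. -/
theorem stmt_3 (d : ℕ) (hd : 2 ≤ d) [NeZero d] (q : Fin d → ℝ)
    (hq0 : q 0 = 1) (hq : ∀ i : Fin d, i ≠ 0 → 0 < q i ∧ q i ≤ 1)
    (hqsum : ∑ i ∈ Finset.univ.filter (· ≠ (0 : Fin d)), q i ≤ 1)
    (g : Fin d → ℝ) (hg : ∀ i, g i = q i / ∑ j, q j)
    (P : Matrix (Fin d) (Fin d) ℝ)
    (hP : P = fun i j => if j = 0 then
        (if i = 0 then 1 - ∑ k ∈ Finset.univ.filter (· ≠ (0 : Fin d)), q k else q i)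
        else (if i = 0 then (1 : ℝ) else 0))
    (A B : Matrix (Fin d) (Fin d) ℝ)
    (hA : (∀ i j, 0 ≤ A i j) ∧ (∀ j, ∑ i, A i j = 1) ∧ A.mulVec g = g)
    (hB : (∀ i j, 0 ≤ B i j) ∧ (∀ j, ∑ i, B i j = 1) ∧ B.mulVec g = g)
    (l : ℝ) (hl : l ∈ Set.Ioo (0 : ℝ) 1)
    (hconv : P = l • A + (1 - l) • B) :
    A = P ∧ B = P := by
  obtain ⟨hAnn, hAcol, hAfix⟩ := hA
  obtain ⟨hBnn, hBcol, hBfix⟩ := hB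
  obtain ⟨hl0, hl1⟩ := hl
  have hSq : (1:ℝ) ≤ ∑ j, q j := by
    calc (1:ℝ) = q 0 := hq0.symm
      _ ≤ ∑ j, q j := Finset.single_le_sum (f := q)
          (fun i _ => by
            by_cases h : i = 0
            · simp [h, hq0]
            · exact (hq i h).1.le) (Finset.mem_univ 0)
  have hS : (0:ℝ) < ∑ j, q j := lt_of_lt_of_le one_pos hSq
  have hz : ∀ i j : Fin d, i ≠ 0 → j ≠ 0 → A i j = 0 ∧ B i j = 0 := by
    intro i j hi hj
    have hPij : P i j = 0 := by simp [hP, hi, hj]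
    have hc := congrFun (congrFun hconv i) j
    simp only [Matrix.add_apply, Matrix.smul_apply, smul_eq_mul] at hc
    rw [hPij] at hc
    constructor <;> nlinarith [hAnn i j, hBnn i j]
  have key : ∀ M : Matrix (Fin d) (Fin d) ℝ, (∀ i j, 0 ≤ M i j) →
      (∀ j, ∑ i, M i j = 1) → M.mulVec g = g →
      (∀ i j : Fin d, i ≠ 0 → j ≠ 0 → M i j = 0) → M = P := by
    intro M hnn hcol hfix hzero
    have hrow0 : ∀ i : Fin d, i ≠ 0 → M i 0 = q i := by
      intro i hi
      have h1 : ∑ j, M i j * g j = g i := congrFun hfix i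
      have h2 : ∑ j, M i j * g j = M i 0 * g 0 :=
        Finset.sum_eq_single_of_mem 0 (Finset.mem_univ _)
          (fun j _ hj => by rw [hzero i j hi hj]; ring)
      rw [h2, hg 0, hg i, hq0] at h1
      have hS' := hS.ne'
      field_simp at h1
      exact h1
    have hcolj : ∀ j : Fin d, j ≠ 0 → M 0 j = 1 := by
      intro j hj
      have h1 := hcol j
      have h2 : ∑ i, M i j = M 0 j :=
        Finset.sum_eq_single_of_mem 0 (Finset.mem_univ _)
          (fun i _ hi => hzero i j hi hj)
      rw [h2] at h1; exact h1
    have he : Finset.univ.filter (· ≠ (0:Fin d)) = Finset.univ.erase 0 :=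
      Finset.filter_ne' _ _
    have h00 : M 0 0 = 1 - ∑ k ∈ Finset.univ.filter (· ≠ (0:Fin d)), q k := by
      have h1 := hcol 0
      rw [← Finset.add_sum_erase _ _ (Finset.mem_univ (0:Fin d))] at h1
      have h2 : ∑ i ∈ Finset.univ.erase 0, M i 0 = ∑ i ∈ Finset.univ.erase 0, q i :=
        Finset.sum_congr rfl (fun i hi => hrow0 i (Finset.ne_of_mem_erase hi))
      rw [h2] at h1
      rw [he]
      linarith
    ext i j
    rw [hP]
    by_cases hj : j = 0 <;> by_cases hi : i = 0
    · subst hi; subst hj; simpa using h00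
    · subst hj; simp only [if_pos rfl, if_neg hi]; exact hrow0 i hi
    · subst hi; simp only [if_neg hj, if_pos rfl]; exact hcolj j hj
    · simp only [if_neg hj, if_neg hi]; exact hzero i j hi hj
  exact ⟨key A hAnn hAcol hAfix (fun i j hi hj => (hz i j hi hj).1),
         key B hBnn hBcol hBfix (fun i j hi hj => (hz i j hi hj).2)⟩
end

section
/- Let q₁₀, q₂₀ ∈ (0,1) with q₂₀ < q₁₀ and q₁₀ + q₂₀ > 1. Then every 3×3 column-stochastic nonnegative matrix R fixing the Gibbs vector g = (1,q₁₀,q₂₀)/(1+q₁₀+q₂₀) and satisfying R e₀ = (0, a, 1−a)^T for some a ∈ [0,1] must have zero in its (0,0) entry, and no product of finitely many such matrices each acting trivially on one of the three levels can have (0,0) entry equal to 0. -/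
/-- above the threshold temperature (`q10 + q20 > 1`), every
Thermal Process sending `e₀` to a state `(0, a, 1-a)` has vanishing `(0,0)`
entry, while no finite product of Thermal Processes each acting trivially on
some level has vanishing `(0,0)` entry. -/
theorem stmt_9 (q10 q20 : ℝ)
    (hq10 : 0 < q10 ∧ q10 < 1) (hq20 : 0 < q20 ∧ q20 < 1)
    (hlt : q20 < q10) (hsum : 1 < q10 + q20)
    (g : Fin 3 → ℝ)
    (hg : g = ![1 / (1 + q10 + q20), q10 / (1 + q10 + q20), q20 / (1 + q10 + q20)])
    (TP : Matrix (Fin 3) (Fin 3) ℝ → Prop)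
    (hTP : ∀ T, TP T ↔ (∀ i j, 0 ≤ T i j) ∧ (∀ j, ∑ i, T i j = 1) ∧ T.mulVec g = g)
    (Triv : Matrix (Fin 3) (Fin 3) ℝ → Fin 3 → Prop)
    (hTriv : ∀ T k, Triv T k ↔
      (∀ i, T i k = if i = k then (1 : ℝ) else 0) ∧
      (∀ j, T k j = if j = k then (1 : ℝ) else 0)) :
    (∀ R : Matrix (Fin 3) (Fin 3) ℝ, TP R →
      (∃ a : ℝ, a ∈ Set.Icc (0 : ℝ) 1 ∧
        R.mulVec ![1, 0, 0] = ![0, a, 1 - a]) → R 0 0 = 0) ∧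
    ∀ L : List (Matrix (Fin 3) (Fin 3) ℝ),
      (∀ X ∈ L, TP X ∧ ∃ k, Triv X k) → L.prod 0 0 ≠ 0 := by
  have hden : (0:ℝ) < 1 + q10 + q20 := by linarith [hq10.1, hq20.1]
  constructor
  · rintro R hR ⟨a, ha, hRe⟩
    have h := congrFun hRe 0
    simp [Matrix.mulVec, dotProduct, Fin.sum_univ_three] at h
    linarith
  · have key : ∀ X : Matrix (Fin 3) (Fin 3) ℝ, TP X → (∃ k, Triv X k) → 0 < X 0 0 := by
      rintro X hX ⟨k, hk⟩
      rw [hTP] at hX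
      obtain ⟨hpos, hcol, hgibbs⟩ := hX
      rw [hTriv] at hk
      obtain ⟨hc, hr⟩ := hk
      have hle : ∀ i j, X i j ≤ 1 := by
        intro i j
        have hs := Finset.single_le_sum (f := fun i => X i j)
          (fun i _ => hpos i j) (Finset.mem_univ i)
        rw [hcol j] at hs
        exact hs
      have hg0 := congrFun hgibbs 0
      rw [hg] at hg0
      simp [Matrix.mulVec, dotProduct, Fin.sum_univ_three] at hg0
      by_contra h
      have hX00 : X 0 0 = 0 := le_antisymm (not_lt.mp h) (hpos 0 0)
      fin_cases k
      · have := hr 0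
        simp at this
        rw [this] at hX00
        norm_num at hX00
      · have h01 : X 0 1 = 0 := by simpa using hc 0
        have h02 := hle 0 2
        rw [hX00, h01] at hg0
        have hne : (1 + q10 + q20) ≠ 0 := hden.ne'
        have heq : X 0 2 * q20 = 1 := by
          field_simp at hg0
          linarith
        nlinarith [hpos 0 2, hq20.1, hq20.2]
      · have h02 : X 0 2 = 0 := by simpa using hc 0
        rw [hX00, h02] at hg0
        have hne : (1 + q10 + q20) ≠ 0 := hden.ne'
        have heq : X 0 1 * q10 = 1 := by
          field_simp at hg0
          linarith
        nlinarith [hpos 0 1, hle 0 1, hq10.1, hq10.2]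
    intro L hL
    have main : ∀ M : List (Matrix (Fin 3) (Fin 3) ℝ),
        (∀ X ∈ M, TP X ∧ ∃ k, Triv X k) →
        (∀ i j, 0 ≤ M.prod i j) ∧ 0 < M.prod 0 0 := by
      intro M
      induction M with
      | nil =>
        intro _
        refine ⟨fun i j => ?_, by simp⟩
        simp [Matrix.one_apply]
        split <;> norm_num
      | cons X M ih =>
        intro h
        obtain ⟨hXtp, hXtriv⟩ := h X List.mem_cons_self
        have hrest := ih (fun Y hY => h Y (List.mem_cons_of_mem _ hY))
        have hXpos : ∀ i j, 0 ≤ X i j := ((hTP X).mp hXtp).1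
        rw [List.prod_cons]
        constructor
        · intro i j
          rw [Matrix.mul_apply]
          exact Finset.sum_nonneg fun k _ => mul_nonneg (hXpos i k) (hrest.1 k j)
        · rw [Matrix.mul_apply]
          exact Finset.sum_pos' (fun k _ => mul_nonneg (hXpos 0 k) (hrest.1 k 0))
            ⟨0, Finset.mem_univ 0, mul_pos (key X hXtp hXtriv) hrest.2⟩
    exact (main L hL).2.ne'
end

section
/- Let g ∈ ℝ^d have strictly positive entries summing to 1, and let p, r be probability vectors in ℝ^d. Suppose there exists a column-stochastic nonnegative matrix T with T g = g and T p = r. If the support of p is contained in a set A ⊆ {0,…,d−1} and the support of r is contained in a set B ⊆ {0,…,d−1}, then Σ_{i∈A} g_i ≤ Σ_{j∈B} g_j is false only if no such T exists; i.e., necessarily Σ_{i∈A} g_i ≤ Σ_{j∈B} g_j. -/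
/-- Thermal Processes cannot increase deterministically
extractable work: if `T p = r`, `p` has full support on `A` and the support of
`r` lies in `B`, then `Σ_{i∈A} g_i ≤ Σ_{j∈B} g_j`. -/
theorem stmt_11 (d : ℕ) (g : Fin d → ℝ) (hg : ∀ i, 0 < g i)
    (hgsum : ∑ i, g i = 1)
    (p r : Fin d → ℝ)
    (hp : (∀ i, 0 ≤ p i) ∧ ∑ i, p i = 1)
    (hr : (∀ i, 0 ≤ r i) ∧ ∑ i, r i = 1)
    (T : Matrix (Fin d) (Fin d) ℝ)
    (hT : (∀ i j, 0 ≤ T i j) ∧ (∀ j, ∑ i, T i j = 1) ∧ T.mulVec g = g)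
    (hTp : T.mulVec p = r)
    (A B : Finset (Fin d))
    (hsuppp : {i | p i ≠ 0} = (A : Set (Fin d)))
    (hsuppr : {i | r i ≠ 0} ⊆ (B : Set (Fin d))) :
    ∑ i ∈ A, g i ≤ ∑ j ∈ B, g j := by
  obtain ⟨hTnn, hTcol, hTg⟩ := hT
  -- T j i = 0 for j ∉ B, i ∈ A
  have hzero : ∀ j ∉ B, ∀ i ∈ A, T j i = 0 := by
    intro j hj i hi
    have hrj : r j = 0 := by
      by_contra h
      exact hj (hsuppr h)
    have hsum : ∑ k, T j k * p k = 0 := by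
      rw [← hrj, ← hTp]; rfl
    have hterm : T j i * p i = 0 := by
      have := (Finset.sum_eq_zero_iff_of_nonneg
        (fun k _ => mul_nonneg (hTnn j k) (hp.1 k))).mp hsum i (Finset.mem_univ i)
      exact this
    have hpi : p i ≠ 0 := by
      have : i ∈ {i | p i ≠ 0} := by rw [hsuppp]; exact hi
      exact this
    exact (mul_eq_zero.mp hterm).resolve_right hpi
  -- For i ∈ A, ∑_{j ∈ B} T j i = 1
  have hcolB : ∀ i ∈ A, ∑ j ∈ B, T j i = 1 := by
    intro i hi
    have : ∑ j ∈ B, T j i = ∑ j, T j i := by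
      exact (Finset.sum_subset (Finset.subset_univ B)
        (fun j _ hj => hzero j hj i hi))
    rw [this, hTcol i]
  calc ∑ i ∈ A, g i = ∑ i ∈ A, (∑ j ∈ B, T j i) * g i := by
        apply Finset.sum_congr rfl
        intro i hi; rw [hcolB i hi, one_mul]
    _ = ∑ j ∈ B, ∑ i ∈ A, T j i * g i := by
        rw [Finset.sum_comm]
        apply Finset.sum_congr rfl
        intro i _; rw [Finset.sum_mul]
    _ ≤ ∑ j ∈ B, ∑ i, T j i * g i := by
        apply Finset.sum_le_sum
        intro j _
        apply Finset.sum_le_sum_of_subset_of_nonneg (Finset.subset_univ A)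
        intro i _ _
        exact mul_nonneg (hTnn j i) (hg i).le
    _ = ∑ j ∈ B, g j := by
        apply Finset.sum_congr rfl
        intro j _
        have := congrFun hTg j
        simpa [Matrix.mulVec, dotProduct] using this
end
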